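/- Let n ≥ 3 and let (s_{i_0}, s_{j_0}) be a pair of reflections in D_n generating a dihedral subgroup isomorphic to D_m (m ≥ 3, m dividing n). Then the Hurwitz orbit of (s_{i_0}, s_{j_0}) under the B_2-action consists exactly of the pairs (s_i, s_j) with i ≡ i_0 (mod n/m) and j − i = j_0 − i_0 in ℤ/nℤ. -/

import Mathlib

/-- One elementary braid (Hurwitz) move on a tuple of elements of a group `G`,
encoded as a list: `σᵢ` replaces the adjacent pair `(a, b)` occurring at some
position by `(a * b * a⁻¹, a)`. -/
inductive BraidStep {G : Type*} [Group G] : List G → List G → Prop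
  | head (a b : G) (t : List G) : BraidStep (a :: b :: t) (a * b * a⁻¹ :: a :: t)
  | tail (a : G) {l₁ l₂ : List G} : BraidStep l₁ l₂ → BraidStep (a :: l₁) (a :: l₂)

/-- Hurwitz (braid) equivalence: the equivalence relation generated by
elementary braid moves (so finitely many moves and their inverses). -/
def HurwitzEquiv {G : Type*} [Group G] : List G → List G → Prop :=
  Relation.EqvGen BraidStep

/-- Braid-automorphism equivalence: `v` and `w` differ by a braid move sequence
together with the diagonal action of a group automorphism. -/
def BAEquiv {G : Type*} [Group G] (v w : List G) : Prop :=
  ∃ φ : G ≃* G, HurwitzEquiv (v.map ⇑φ) w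

/-- A `G`-Hurwitz vector (genus 0): all entries nontrivial, the entries
generate `G`, and the product of the entries is `1`. -/
def IsHurwitzVector {G : Type*} [Group G] (v : List G) : Prop :=
  (∀ c ∈ v, c ≠ 1) ∧ Subgroup.closure {g | g ∈ v} = ⊤ ∧ v.prod = 1

/-- The reflection `s i = x^i * y` of the dihedral group `D_n`,
where `x = DihedralGroup.r 1` and `y = DihedralGroup.sr 0`. -/
def sD {n : ℕ} (i : ZMod n) : DihedralGroup n :=
  DihedralGroup.r i * DihedralGroup.sr 0

/-- Being a reflection in the dihedral group. -/
def IsReflection {n : ℕ} (g : DihedralGroup n) : Prop :=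
  ∃ i : ZMod n, g = DihedralGroup.sr i

/-!
A braid move sends `(s_a, s_{a+δ})` to `(s_{a-δ}, s_a)`, and the inverse move to
`(s_{a+δ}, s_{a+2δ})`; so the orbit of `(s_{i₀}, s_{i₀+δ})` consists of the pairs
`(s_b, s_{b+δ})` with `b - i₀` a multiple of `δ`. In `ℤ/nℤ` the multiples of `δ` are exactly
the multiples of `gcd(n, δ) = n/m`.
-/

section Hurwitz

variable {G : Type*} [Group G]

theorem braidStep_pair_iff {a b : G} {w : List G} :
    BraidStep [a, b] w ↔ w = [a * b * a⁻¹, a] := by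
  refine ⟨fun h => ?_, fun h => h ▸ BraidStep.head a b []⟩
  rcases h with _ | ⟨_, _ | ⟨_, ⟨⟩⟩⟩
  rfl

theorem braidStep_to_pair_iff {v : List G} {c d : G} :
    BraidStep v [c, d] ↔ v = [d, d⁻¹ * c * d] := by
  constructor
  · rintro (_ | ⟨_, _ | ⟨_, ⟨⟩⟩⟩)
    simp [mul_assoc]
  · rintro rfl
    simpa [mul_assoc] using BraidStep.head d (d⁻¹ * c * d) []

theorem HurwitzEquiv.iff_of_braidStep {P : List G → Prop}
    (hP : ∀ v w, BraidStep v w → (P v ↔ P w)) {v w : List G} (h : HurwitzEquiv v w) :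
    P v ↔ P w := by
  induction h with
  | rel _ _ h => exact hP _ _ h
  | refl => rfl
  | symm _ _ _ ih => exact ih.symm
  | trans _ _ _ _ _ ih₁ ih₂ => exact ih₁.trans ih₂

end Hurwitz

namespace ZMod

variable {n : ℕ}

theorem dvd_natCast_gcd_val (a : ZMod n) : a ∣ ((n.gcd a.val : ℕ) : ZMod n) :=
  ⟨a⁻¹, by rw [mul_inv_eq_gcd, Nat.gcd_comm]⟩

theorem natCast_gcd_val_dvd [NeZero n] (a : ZMod n) : ((n.gcd a.val : ℕ) : ZMod n) ∣ a := by
  simpa using Nat.cast_dvd_cast (α := ZMod n) (Nat.gcd_dvd_right n a.val)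

theorem dvd_iff_natCast_gcd_val_dvd [NeZero n] {a x : ZMod n} :
    a ∣ x ↔ ((n.gcd a.val : ℕ) : ZMod n) ∣ x :=
  ⟨(natCast_gcd_val_dvd a).trans, (dvd_natCast_gcd_val a).trans⟩

end ZMod

namespace DihedralGroup

variable {n : ℕ}

theorem sD_eq_sr (i : ZMod n) : sD i = sr (-i) := by
  simp [sD]

theorem sD_inv (i : ZMod n) : (sD i)⁻¹ = sD i := by
  simp [sD_eq_sr]

theorem sD_mul_sD_mul_inv (i j : ZMod n) : sD i * sD j * (sD i)⁻¹ = sD (2 * i - j) := by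
  simp only [sD_eq_sr, sr_mul_sr, r_mul_sr, inv_sr]
  ring_nf

theorem inv_sD_mul_sD_mul (i j : ZMod n) : (sD i)⁻¹ * sD j * sD i = sD (2 * i - j) := by
  rw [← sD_mul_sD_mul_inv, sD_inv]

def reflPair (a δ : ZMod n) : List (DihedralGroup n) := [sD a, sD (a + δ)]

theorem braidStep_reflPair_iff {a δ : ZMod n} {w : List (DihedralGroup n)} :
    BraidStep (reflPair a δ) w ↔ w = reflPair (a - δ) δ := by
  rw [reflPair, braidStep_pair_iff, sD_mul_sD_mul_inv, reflPair]
  ring_nf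

theorem braidStep_to_reflPair_iff {v : List (DihedralGroup n)} {a δ : ZMod n} :
    BraidStep v (reflPair a δ) ↔ v = reflPair (a + δ) δ := by
  rw [reflPair, braidStep_to_pair_iff, inv_sD_mul_sD_mul, reflPair]
  ring_nf

theorem hurwitzEquiv_reflPair_shift (a δ : ZMod n) (k : ℤ) :
    HurwitzEquiv (reflPair a δ) (reflPair (a + k * δ) δ) := by
  induction k using Int.induction_on with
  | zero =>
    rw [Int.cast_zero, zero_mul, add_zero]
    exact Relation.EqvGen.refl _
  | succ k ih =>
    refine ih.trans _ _ _ (Relation.EqvGen.symm _ _ (Relation.EqvGen.rel _ _ ?_))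
    rw [braidStep_reflPair_iff]
    push_cast
    ring_nf
  | pred k ih =>
    refine ih.trans _ _ _ (Relation.EqvGen.rel _ _ ?_)
    rw [braidStep_reflPair_iff]
    push_cast
    ring_nf

theorem hurwitzEquiv_reflPair_iff {a δ : ZMod n} {w : List (DihedralGroup n)} :
    HurwitzEquiv (reflPair a δ) w ↔ ∃ b, w = reflPair b δ ∧ δ ∣ b - a := by
  constructor
  · refine fun h => (h.iff_of_braidStep (P := fun v => ∃ b, v = reflPair b δ ∧ δ ∣ b - a)
      fun v w hvw => ?_).mp ⟨a, rfl, by simp⟩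
    constructor
    · rintro ⟨b, rfl, k, hk⟩
      exact ⟨b - δ, braidStep_reflPair_iff.mp hvw, k - 1, by linear_combination hk⟩
    · rintro ⟨b, rfl, k, hk⟩
      exact ⟨b + δ, braidStep_to_reflPair_iff.mp hvw, k + 1, by linear_combination hk⟩
  · rintro ⟨b, rfl, c, hc⟩
    obtain ⟨k, rfl⟩ := ZMod.intCast_surjective c
    convert hurwitzEquiv_reflPair_shift a δ k using 2
    linear_combination hc

end DihedralGroup

open DihedralGroup in
theorem reflection_pair_orbit_general (n : ℕ) (hn : 3 ≤ n) (i₀ j₀ : ZMod n) (m : ℕ)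
    (hm : m = n / Nat.gcd n ((j₀ - i₀).val)) :
    ∀ w : List (DihedralGroup n),
      HurwitzEquiv [sD i₀, sD j₀] w ↔
        ∃ i j : ZMod n, w = [sD i, sD j] ∧
          (∃ t : ZMod n, i = i₀ + t * ((n / m : ℕ) : ZMod n)) ∧
          j - i = j₀ - i₀ := by
  have : NeZero n := ⟨by omega⟩
  have hnm : n / m = n.gcd (j₀ - i₀).val := by
    rw [hm]
    exact Nat.div_div_self (Nat.gcd_dvd_left _ _) (by omega)
  intro w
  have hpair : [sD i₀, sD j₀] = reflPair i₀ (j₀ - i₀) := by simp [reflPair]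
  rw [hpair, hurwitzEquiv_reflPair_iff, hnm]
  constructor
  · rintro ⟨i, rfl, hdvd⟩
    obtain ⟨t, ht⟩ := ZMod.dvd_iff_natCast_gcd_val_dvd.mp hdvd
    exact ⟨i, i + (j₀ - i₀), rfl, ⟨t, by linear_combination ht⟩, by ring⟩
  · rintro ⟨i, j, rfl, ⟨t, hi⟩, hji⟩
    refine ⟨i, by rw [reflPair, ← hji, add_sub_cancel], ?_⟩
    exact ZMod.dvd_iff_natCast_gcd_val_dvd.mpr ⟨t, by rw [hi]; ring⟩

/-- normalization of reflection pairs.  If the pair of reflections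
`(s_{i₀}, s_{j₀})` generates a dihedral subgroup `D_m` with `m = n / gcd(n, j₀ - i₀)` and
`m ≥ 3`, then its Hurwitz orbit under the `B₂`-action consists exactly of the pairs
`(s_i, s_j)` with `i ≡ i₀ (mod n/m)` and `j - i = j₀ - i₀`. -/
theorem reflection_pair_orbit (n : ℕ) (hn : 3 ≤ n) (i₀ j₀ : ZMod n) (m : ℕ)
    (hm : m = n / Nat.gcd n ((j₀ - i₀).val)) (hm3 : 3 ≤ m) :
    ∀ w : List (DihedralGroup n),
      HurwitzEquiv [sD i₀, sD j₀] w ↔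
        ∃ i j : ZMod n, w = [sD i, sD j] ∧
          (∃ t : ZMod n, i = i₀ + t * ((n / m : ℕ) : ZMod n)) ∧
          j - i = j₀ - i₀ :=
  reflection_pair_orbit_general n hn i₀ j₀ m hm
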